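/- Let v ∈ ℂ^N with v ≠ 0 and let h be a positive-definite Hermitian N×N matrix. Then for all Hermitian N×N matrices H_0, …, H_{N−1}: Σ_{j=0}^{N−1} (−1)^j · (d/dt at t = 0 of [ (v*(h+tH_j)v)^{−N} · pbar(v, h+tH_j)(H_0, …, H_{j−1}, H_{j+1}, …, H_{N−1}) ]) = 0. In other words, the (N−1)-form (v*hv)^{−N} p̄(v) on the space of positive-definite Hermitian matrices is closed. -/

import Mathlib

/-!
Up to a constant `κ`, `pbar v g G` is the determinant with rows `v*g, v*G₀, …, v*G_{N-2}`,
so it and `v*gv` are affine in `g` and the `j`-th derivative splits into two terms. Moving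
the row `v*H_j` to the front gives `Σⱼ (-1)ʲ pbar(v,Hⱼ)(Ĥⱼ) = N Δ` with
`Δ = κ det[v*H₀; …; v*H_{N-1}]`. The `N + 1` rows `v*h, v*H₀, …, v*H_{N-1}` of `ℂ^N` are
linearly dependent, and the alternating sum expressing this gives
`Σⱼ (-1)ʲ (v*Hⱼv) pbar(v,h)(Ĥⱼ) = (v*hv) Δ`. Hence the total is `(v*hv)^{-N} Δ (-N + N) = 0`.
-/

open Matrix BigOperators
open scoped ComplexOrder

noncomputable section

/-- The `i`-th entry of the row vector `v* h`, where `v*` is the conjugate transpose of the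
column vector `v`. -/
def vstarM {N : ℕ} (v : Fin N → ℂ) (h : Matrix (Fin N) (Fin N) ℂ) (i : Fin N) : ℂ :=
  ∑ j, (starRingEnd ℂ) (v j) * h j i

/-- The scalar `v* h v`. -/
def vhv {N : ℕ} (v : Fin N → ℂ) (h : Matrix (Fin N) (Fin N) ℂ) : ℂ :=
  ∑ i, vstarM v h i * v i

/-- `pbar(v,h)(H_1,…,H_{N−1})` : the value of the `(N-1)`-form `p̄(v)` at the point `h` on
the tangent vectors `H_1,…,H_{N-1}`.  Here `N = n+2`; the matrix `M⁽ⁱ⁾` has `(k,l)`-entry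
`(v*H_l)_{r_k}` where `r` is the decreasing enumeration of `{0,…,N-1}` omitting `i`
(`r k = Fin.rev ((Fin.rev i).succAbove k)`), and the sign `(−1)^{i−1}` (1-based) is
`(−1)^{i}` in 0-based indexing. -/
def pbar {n : ℕ} (v : Fin (n + 2) → ℂ) (h : Matrix (Fin (n + 2)) (Fin (n + 2)) ℂ)
    (H : Fin (n + 1) → Matrix (Fin (n + 2)) (Fin (n + 2)) ℂ) : ℂ :=
  2 * (-1 : ℂ) ^ ((n + 2) * (n + 1) / 2) *
    ∑ i : Fin (n + 2), (-1 : ℂ) ^ (i : ℕ) * vstarM v h i *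
      Matrix.det (Matrix.of fun k l : Fin (n + 1) =>
        vstarM v (H l) (Fin.rev ((Fin.rev i).succAbove k)))

/-- `dpbar(v)(H_1,…,H_N) = 2N(−1)^{(N+2)(N−1)/2} det M` where `M` has `(k,l)`-entry
`(v*H_l)_{N+1−k}` (1-based), i.e. `(v*H_l)_{Fin.rev k}` in 0-based indexing. -/
def dpbar {n : ℕ} (v : Fin (n + 2) → ℂ)
    (H : Fin (n + 2) → Matrix (Fin (n + 2)) (Fin (n + 2)) ℂ) : ℂ :=
  2 * (n + 2) * (-1 : ℂ) ^ ((n + 4) * (n + 1) / 2) *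
    Matrix.det (Matrix.of fun k l : Fin (n + 2) => vstarM v (H l) (Fin.rev k))

section Determinant

variable {R : Type*} [CommRing R]

theorem det_cons_succAbove {n : ℕ} (r : Fin (n + 1) → Fin (n + 1) → R) (j : Fin (n + 1)) :
    det (of (Fin.cons (r j) fun l => r (j.succAbove l))) = (-1) ^ (j : ℕ) * det (of r) := by
  have hperm : of (Fin.cons (r j) fun l => r (j.succAbove l)) =
      (of r).submatrix j.cycleRange.symm id :=
    congrArg of (Fin.cons_removeNth_eq_comp_cycleRange_symm r j)
  rw [hperm, det_permute, Equiv.Perm.sign_symm, Fin.sign_cycleRange]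
  simp

theorem sum_neg_one_pow_mul_dotProduct_mul_det_succAbove {N : ℕ} (x : Fin (N + 1) → Fin N → R)
    (v : Fin N → R) :
    ∑ i : Fin (N + 1), (-1) ^ (i : ℕ) * (x i ⬝ᵥ v) * det (of fun l => x (i.succAbove l)) = 0 := by
  classical
  set A : Matrix (Fin (N + 1)) (Fin (N + 1)) R := of fun i => Fin.snoc (x i) (x i ⬝ᵥ v)
  have hA : det A = 0 := by
    have hcol : A.updateCol (Fin.last N)
        (fun i => ∑ c, (Fin.snoc v 0 : Fin (N + 1) → R) c • A i c) = A := by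
      ext i c
      refine Fin.lastCases ?_ (fun c => ?_) c
      · simp [A, Fin.sum_univ_castSucc, dotProduct, mul_comm]
      · simp [A]
    simpa using (congrArg det hcol).symm.trans (det_updateCol_sum A (Fin.last N) (Fin.snoc v 0))
  have hexp := det_succ_column A (Fin.last N)
  rw [← neg_one_pow_mul_eq_zero_iff (n := N), Finset.mul_sum, ← hA, hexp]
  refine Finset.sum_congr rfl fun i _ => ?_
  simp only [A, of_apply, Fin.snoc_last, Fin.val_last, Fin.succAbove_last, submatrix,
    Fin.snoc_castSucc, pow_add]
  ring

end Determinant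

theorem hasDerivAt_zpow_affine_mul_affine (m : ℤ) {c : ℂ} (hc : c ≠ 0) (a P Q : ℂ) :
    HasDerivAt (fun t : ℝ => (c + t * a) ^ m * (P + t * Q))
      (m * c ^ (m - 1) * a * P + c ^ m * Q) 0 := by
  have haffine : ∀ b d : ℂ, HasDerivAt (fun z : ℂ => b + z * d) d 0 := fun b d => by
    simpa using ((hasDerivAt_id (0 : ℂ)).mul_const d).const_add b
  have hpow : HasDerivAt (fun z : ℂ => (c + z * a) ^ m) (m * c ^ (m - 1) * a) 0 := by
    have hcomp :=
      (hasDerivAt_zpow m (c + 0 * a) (Or.inl (by simpa using hc))).comp 0 (haffine c a)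
    rwa [zero_mul, add_zero] at hcomp
  simpa using (hpow.mul (haffine P Q)).comp_ofReal (z := 0)

section Pbar

variable {N n : ℕ}

theorem vstarM_eq_vecMul (v : Fin N → ℂ) (h : Matrix (Fin N) (Fin N) ℂ) :
    vstarM v h = star v ᵥ* h := rfl

theorem vhv_eq_vstarM_dotProduct (v : Fin N → ℂ) (h : Matrix (Fin N) (Fin N) ℂ) :
    vhv v h = vstarM v h ⬝ᵥ v := rfl

theorem vhv_eq_star_dotProduct_mulVec (v : Fin N → ℂ) (h : Matrix (Fin N) (Fin N) ℂ) :
    vhv v h = star v ⬝ᵥ h *ᵥ v := by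
  rw [dotProduct_mulVec, ← vstarM_eq_vecMul, vhv_eq_vstarM_dotProduct]

theorem vstarM_add_smul (v : Fin N → ℂ) (h H : Matrix (Fin N) (Fin N) ℂ) (s : ℂ) :
    vstarM v (h + s • H) = vstarM v h + s • vstarM v H := by
  simp only [vstarM_eq_vecMul, vecMul_add, vecMul_smul]

theorem vhv_add_smul (v : Fin N → ℂ) (h H : Matrix (Fin N) (Fin N) ℂ) (s : ℂ) :
    vhv v (h + s • H) = vhv v h + s * vhv v H := by
  simp only [vhv_eq_star_dotProduct_mulVec, add_mulVec, smul_mulVec, dotProduct_add,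
    dotProduct_smul, smul_eq_mul]

theorem Matrix.PosDef.vhv_pos {v : Fin N → ℂ} (hv : v ≠ 0) {h : Matrix (Fin N) (Fin N) ℂ}
    (hh : h.PosDef) : 0 < vhv v h := by
  rw [vhv_eq_star_dotProduct_mulVec]
  exact hh.dotProduct_mulVec_pos hv

def pbarScale (n : ℕ) : ℂ :=
  2 * (-1) ^ ((n + 2) * (n + 1) / 2) * Equiv.Perm.sign (Fin.revPerm : Equiv.Perm (Fin (n + 1)))

theorem pbar_eq_pbarScale_mul_det (v : Fin (n + 2) → ℂ)
    (g : Matrix (Fin (n + 2)) (Fin (n + 2)) ℂ)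
    (G : Fin (n + 1) → Matrix (Fin (n + 2)) (Fin (n + 2)) ℂ) :
    pbar v g G = pbarScale n * det (of (Fin.cons (vstarM v g) fun l => vstarM v (G l))) := by
  rw [pbar, pbarScale, det_succ_row_zero, Finset.mul_sum, Finset.mul_sum]
  refine Finset.sum_congr rfl fun i _ => ?_
  have hminor :
      of (fun k l : Fin (n + 1) => vstarM v (G l) (Fin.rev ((Fin.rev i).succAbove k))) =
        ((of (Fin.cons (vstarM v g) fun l => vstarM v (G l))).submatrix Fin.succ
          i.succAbove)ᵀ.submatrix Fin.revPerm id := by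
    ext k l
    simp [Fin.succAbove_rev_right]
  rw [hminor, det_permute, det_transpose]
  simp only [of_apply, Fin.cons_zero]
  ring

theorem pbar_add_smul (v : Fin (n + 2) → ℂ) (h H : Matrix (Fin (n + 2)) (Fin (n + 2)) ℂ)
    (s : ℂ) (G : Fin (n + 1) → Matrix (Fin (n + 2)) (Fin (n + 2)) ℂ) :
    pbar v (h + s • H) G = pbar v h G + s * pbar v H G := by
  simp only [pbar, vstarM_add_smul, Pi.add_apply, Pi.smul_apply, smul_eq_mul, mul_add, add_mul,
    Finset.sum_add_distrib, Finset.mul_sum]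
  congr 1
  refine Finset.sum_congr rfl fun i _ => ?_
  ring

theorem pbar_apply_self_succAbove (v : Fin (n + 2) → ℂ)
    (H : Fin (n + 2) → Matrix (Fin (n + 2)) (Fin (n + 2)) ℂ) (j : Fin (n + 2)) :
    pbar v (H j) (fun k => H (j.succAbove k)) =
      (-1) ^ (j : ℕ) * (pbarScale n * det (of fun l => vstarM v (H l))) := by
  rw [pbar_eq_pbarScale_mul_det, det_cons_succAbove (fun l => vstarM v (H l))]
  ring

theorem sum_neg_one_pow_mul_vhv_mul_pbar_succAbove (v : Fin (n + 2) → ℂ)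
    (h : Matrix (Fin (n + 2)) (Fin (n + 2)) ℂ)
    (H : Fin (n + 2) → Matrix (Fin (n + 2)) (Fin (n + 2)) ℂ) :
    ∑ j : Fin (n + 2), (-1) ^ (j : ℕ) * (vhv v (H j) * pbar v h fun k => H (j.succAbove k)) =
      vhv v h * (pbarScale n * det (of fun l => vstarM v (H l))) := by
  have hvanish := sum_neg_one_pow_mul_dotProduct_mul_det_succAbove
    (Fin.cons (vstarM v h) fun l => vstarM v (H l)) v
  have hminor : ∀ (i : Fin (n + 2)) (l : Fin (n + 2)),
      (Fin.cons (vstarM v h) fun l => vstarM v (H l) : Fin (n + 3) → _) (i.succ.succAbove l) =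
        (Fin.cons (vstarM v h) fun l => vstarM v (H (i.succAbove l)) : Fin (n + 2) → _) l := by
    intro i l
    cases l using Fin.cases <;> simp
  rw [Fin.sum_univ_succ] at hvanish
  simp only [Fin.cons_zero, Fin.cons_succ, Fin.succAbove_zero, hminor, Fin.val_zero,
    Fin.val_succ, pow_zero, one_mul, ← vhv_eq_vstarM_dotProduct] at hvanish
  calc ∑ j : Fin (n + 2), (-1) ^ (j : ℕ) * (vhv v (H j) * pbar v h fun k => H (j.succAbove k))
      = -pbarScale n * ∑ j : Fin (n + 2), (-1) ^ ((j : ℕ) + 1) * vhv v (H j) *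
          det (of fun l => (Fin.cons (vstarM v h) fun l => vstarM v (H (j.succAbove l)) :
            Fin (n + 2) → _) l) := by
        rw [Finset.mul_sum]
        refine Finset.sum_congr rfl fun j _ => ?_
        rw [pbar_eq_pbarScale_mul_det]
        ring
    _ = vhv v h * (pbarScale n * det (of fun l => vstarM v (H l))) := by
        linear_combination -pbarScale n * hvanish

theorem deriv_vhv_zpow_mul_pbar (m : ℤ) (v : Fin (n + 2) → ℂ)
    (h H : Matrix (Fin (n + 2)) (Fin (n + 2)) ℂ)
    (G : Fin (n + 1) → Matrix (Fin (n + 2)) (Fin (n + 2)) ℂ) (hc : vhv v h ≠ 0) :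
    deriv (fun t : ℝ => vhv v (h + (t : ℂ) • H) ^ m * pbar v (h + (t : ℂ) • H) G) 0 =
      m * vhv v h ^ (m - 1) * vhv v H * pbar v h G + vhv v h ^ m * pbar v H G := by
  simp only [vhv_add_smul, pbar_add_smul]
  exact (hasDerivAt_zpow_affine_mul_affine m hc _ _ _).deriv

end Pbar

theorem pbar_form_closed_general {n : ℕ} (v : Fin (n + 2) → ℂ) (hv : v ≠ 0)
    (h : Matrix (Fin (n + 2)) (Fin (n + 2)) ℂ) (hh : h.PosDef)
    (H : Fin (n + 2) → Matrix (Fin (n + 2)) (Fin (n + 2)) ℂ) :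
    ∑ j : Fin (n + 2), (-1 : ℂ) ^ (j : ℕ) *
        deriv (fun t : ℝ =>
          (vhv v (h + (t : ℂ) • H j)) ^ (-(n + 2 : ℤ)) *
            pbar v (h + (t : ℂ) • H j) (fun k => H (j.succAbove k))) 0
      = 0 := by
  have hc : vhv v h ≠ 0 := (hh.vhv_pos hv).ne'
  set m : ℤ := -(n + 2 : ℤ)
  set D := pbarScale n * det (of fun l => vstarM v (H l))
  have hsplit : ∑ j : Fin (n + 2), (-1 : ℂ) ^ (j : ℕ) *
        deriv (fun t : ℝ => vhv v (h + (t : ℂ) • H j) ^ m *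
          pbar v (h + (t : ℂ) • H j) (fun k => H (j.succAbove k))) 0 =
      m * vhv v h ^ (m - 1) * ∑ j : Fin (n + 2), (-1) ^ (j : ℕ) *
          (vhv v (H j) * pbar v h fun k => H (j.succAbove k)) +
        vhv v h ^ m * ∑ j : Fin (n + 2), (-1) ^ (j : ℕ) * ((-1) ^ (j : ℕ) * D) := by
    simp only [deriv_vhv_zpow_mul_pbar _ _ _ _ _ hc, pbar_apply_self_succAbove,
      Finset.mul_sum, ← Finset.sum_add_distrib]
    exact Finset.sum_congr rfl fun j _ => by ring
  have hsigns : ∑ j : Fin (n + 2), (-1 : ℂ) ^ (j : ℕ) * ((-1) ^ (j : ℕ) * D) = (n + 2) * D := by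
    simp [← mul_assoc, ← mul_pow]
  rw [hsplit, sum_neg_one_pow_mul_vhv_mul_pbar_succAbove, hsigns, zpow_sub_one₀ hc]
  field_simp
  push_cast [m]
  ring

/-- for `v ≠ 0` and `h` positive definite Hermitian, the `(N−1)`-form
`(v*hv)^{−N} p̄(v)` on the space of positive definite Hermitian matrices is closed:
for all Hermitian `H_0,…,H_{N−1}`,
`Σ_j (−1)^j ∂_t|_{t=0} [ (v*(h+tH_j)v)^{−N} pbar(v, h+tH_j)(H_0,…,Ĥ_j,…,H_{N−1}) ] = 0`. -/
theorem pbar_form_closed {n : ℕ} (v : Fin (n + 2) → ℂ) (hv : v ≠ 0)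
    (h : Matrix (Fin (n + 2)) (Fin (n + 2)) ℂ) (hh : h.PosDef)
    (H : Fin (n + 2) → Matrix (Fin (n + 2)) (Fin (n + 2)) ℂ)
    (hH : ∀ j, (H j).IsHermitian) :
    ∑ j : Fin (n + 2), (-1 : ℂ) ^ (j : ℕ) *
        deriv (fun t : ℝ =>
          (vhv v (h + (t : ℂ) • H j)) ^ (-(n + 2 : ℤ)) *
            pbar v (h + (t : ℂ) • H j) (fun k => H (j.succAbove k))) 0
      = 0 :=
  pbar_form_closed_general v hv h hh H

end
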